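/- arXiv:2510.14752 — 5 statements merged into one kernel-verified Lean document; each statement's English description precedes it below -/
import Mathlib

section
/- Let n ∈ ℕ and let s ∈ ℝⁿ be sorted non-increasingly with ∑ᵢ sᵢ = 0. If s₁ > (n−1)/2, then γ₁ > n/2 = γ_n, where γ_ℓ := (1/ℓ)∑_{j=1}^{ℓ} s_j + ℓ/2; consequently there exists i ∈ [n−1] with γ_i > n/2 and γ_i > γ_{i+1}. -/
theorem Nat.exists_gt_and_succ_le_of_gt_of_le {α : Type*} [LinearOrder α] (f : ℕ → α) {c : α}
    {a b : ℕ} (hab : a ≤ b) (ha : c < f a) (hb : f b ≤ c) :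
    ∃ i, a ≤ i ∧ i < b ∧ c < f i ∧ f (i + 1) ≤ c := by
  induction b, hab using Nat.le_induction with
  | base => exact absurd hb ha.not_ge
  | succ b hab ih =>
    by_cases hfb : f b ≤ c
    · obtain ⟨i, hai, hib, hfi, hfi1⟩ := ih hfb
      exact ⟨i, hai, hib.trans b.lt_succ_self, hfi, hfi1⟩
    · exact ⟨b, hab, b.lt_succ_self, lt_of_not_ge hfb, hb⟩

theorem stmt1_general (n : ℕ) (hn : 1 ≤ n) (s : ℕ → ℝ)
    (hsum : ∑ j ∈ Finset.range n, s j = 0)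
    (γ : ℕ → ℝ)
    (hγ : ∀ ℓ, γ ℓ = (∑ j ∈ Finset.range ℓ, s j) / (ℓ : ℝ) + (ℓ : ℝ) / 2)
    (h1 : s 0 > ((n : ℝ) - 1) / 2) :
    γ 1 > (n : ℝ) / 2 ∧ γ n = (n : ℝ) / 2 ∧
      ∃ i, 1 ≤ i ∧ i ≤ n - 1 ∧ γ i > (n : ℝ) / 2 ∧ γ i > γ (i + 1) := by
  have hγ_one : γ 1 = s 0 + 1 / 2 := by simp [hγ]
  have hγ_n : γ n = (n : ℝ) / 2 := by simp [hγ, hsum]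
  have hγ_one_gt : γ 1 > (n : ℝ) / 2 := by rw [hγ_one]; linarith
  obtain ⟨i, hi, hin, hγi, hγi_succ⟩ :=
    Nat.exists_gt_and_succ_le_of_gt_of_le γ hn hγ_one_gt hγ_n.le
  exact ⟨hγ_one_gt, hγ_n, i, hi, Nat.le_sub_one_of_lt hin, hγi, hγi_succ.trans_lt hγi⟩

/-- If `s` is sorted non-increasingly with total sum zero and
`s 0 > (n−1)/2`, then `γ 1 > n/2 = γ n`, and consequently there exists
`i ∈ [n−1]` with `γ i > n/2` and `γ i > γ (i+1)`. Here
`γ ℓ := (1/ℓ)∑_{j<ℓ} s j + ℓ/2`. -/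
theorem stmt1 (n : ℕ) (hn : 1 ≤ n) (s : ℕ → ℝ)
    (hsort : ∀ i j, i ≤ j → j < n → s j ≤ s i)
    (hsum : ∑ j ∈ Finset.range n, s j = 0)
    (γ : ℕ → ℝ)
    (hγ : ∀ ℓ, γ ℓ = (∑ j ∈ Finset.range ℓ, s j) / (ℓ : ℝ) + (ℓ : ℝ) / 2)
    (h1 : s 0 > ((n : ℝ) - 1) / 2) :
    γ 1 > (n : ℝ) / 2 ∧ γ n = (n : ℝ) / 2 ∧
      ∃ i, 1 ≤ i ∧ i ≤ n - 1 ∧ γ i > (n : ℝ) / 2 ∧ γ i > γ (i + 1) :=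
  stmt1_general n hn s hsum γ hγ h1
end

section
/- Let s ∈ ℝⁿ be sorted non-increasingly, let σ_ℓ := (1/ℓ)∑_{j=1}^ℓ s_j and γ_ℓ := σ_ℓ + ℓ/2. Fix i ≥ 2 and suppose s_i ≤ s_{i+1} + 1 and s_{i+1} < σ_i − (i+1)/2. Then s_i < σ_{i−1} − i/2, and hence γ_{i−1} > γ_i. -/
/-!
Write `x = s i` and `y = s (i+1)`. Since `i σ_i = (i-1) σ_{i-1} + x`, the hypothesis
`y < σ_i - (i+1)/2` together with `x - 1 ≤ y` gives `(i-1) x < (i-1) σ_{i-1} - i(i-1)/2`,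
i.e. `x < σ_{i-1} - i/2`. The same identity shows that `s ℓ < σ_{ℓ-1} - ℓ/2` is equivalent
to `γ_ℓ < γ_{ℓ-1}`.
-/

open Finset

noncomputable def prefixAvg (s : ℕ → ℝ) (ℓ : ℕ) : ℝ :=
  (∑ j ∈ Icc 1 ℓ, s j) / ℓ

lemma mul_prefixAvg (s : ℕ → ℝ) (ℓ : ℕ) :
    (ℓ : ℝ) * prefixAvg s ℓ = ∑ j ∈ Icc 1 ℓ, s j := by
  rcases Nat.eq_zero_or_pos ℓ with rfl | hℓ
  · simp
  · exact mul_div_cancel₀ _ (by positivity)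

lemma succ_mul_prefixAvg_succ (s : ℕ → ℝ) (ℓ : ℕ) :
    ((ℓ : ℝ) + 1) * prefixAvg s (ℓ + 1) = ℓ * prefixAvg s ℓ + s (ℓ + 1) := by
  have h := mul_prefixAvg s (ℓ + 1)
  push_cast at h
  rw [h, mul_prefixAvg, sum_Icc_succ_top (by omega)]

lemma prefixAvg_succ_add_lt_iff (s : ℕ → ℝ) (ℓ : ℕ) :
    prefixAvg s (ℓ + 1) + ((ℓ : ℝ) + 1) / 2 < prefixAvg s ℓ + (ℓ : ℝ) / 2 ↔
      s (ℓ + 1) < prefixAvg s ℓ - ((ℓ : ℝ) + 1) / 2 := by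
  have hrec := succ_mul_prefixAvg_succ s ℓ
  have hpos : (0 : ℝ) < ℓ + 1 := by positivity
  constructor <;> intro h <;> nlinarith

lemma lt_prefixAvg_sub_of_le_add_one {s : ℕ → ℝ} {ℓ : ℕ} (hℓ : 0 < ℓ)
    (hgap : s (ℓ + 1) ≤ s (ℓ + 2) + 1)
    (hcond : s (ℓ + 2) < prefixAvg s (ℓ + 1) - ((ℓ : ℝ) + 2) / 2) :
    s (ℓ + 1) < prefixAvg s ℓ - ((ℓ : ℝ) + 1) / 2 := by
  have hrec := succ_mul_prefixAvg_succ s ℓ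
  have hℓR : (0 : ℝ) < ℓ := by exact_mod_cast hℓ
  have hpos : (0 : ℝ) < ℓ + 1 := by positivity
  have hmul : (ℓ : ℝ) * s (ℓ + 1) < ℓ * (prefixAvg s ℓ - ((ℓ : ℝ) + 1) / 2) := by
    nlinarith
  exact lt_of_mul_lt_mul_left hmul hℓR.le

theorem stmt3_general (s : ℕ → ℝ)
    (σ γ : ℕ → ℝ)
    (hσ : ∀ ℓ, σ ℓ = (∑ j ∈ Finset.Icc 1 ℓ, s j) / (ℓ : ℝ))
    (hγ : ∀ ℓ, γ ℓ = σ ℓ + (ℓ : ℝ) / 2)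
    (i : ℕ) (hi : 2 ≤ i)
    (hgap : s i ≤ s (i + 1) + 1)
    (hcond : s (i + 1) < σ i - ((i : ℝ) + 1) / 2) :
    s i < σ (i - 1) - (i : ℝ) / 2 ∧ γ (i - 1) > γ i := by
  obtain ⟨ℓ, rfl⟩ : ∃ ℓ, i = ℓ + 1 := ⟨i - 1, by omega⟩
  obtain rfl : σ = prefixAvg s := funext hσ
  simp only [Nat.add_sub_cancel, gt_iff_lt, hγ]
  push_cast at hcond ⊢
  have key := lt_prefixAvg_sub_of_le_add_one (by omega) hgap (by linarith)
  exact ⟨key, (prefixAvg_succ_add_lt_iff s ℓ).2 key⟩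

/-- For a non-increasing vector `s` (1-indexed), with
`σ ℓ := (1/ℓ)∑_{j=1}^ℓ s j` and `γ ℓ := σ ℓ + ℓ/2`, if `i ≥ 2`,
`s i ≤ s (i+1) + 1` and `s (i+1) < σ i − (i+1)/2`, then
`s i < σ (i−1) − i/2`, and hence `γ (i−1) > γ i`. -/
theorem stmt3 (n : ℕ) (s : ℕ → ℝ)
    (hsort : ∀ a b, 1 ≤ a → a ≤ b → b ≤ n → s b ≤ s a)
    (σ γ : ℕ → ℝ)
    (hσ : ∀ ℓ, σ ℓ = (∑ j ∈ Finset.Icc 1 ℓ, s j) / (ℓ : ℝ))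
    (hγ : ∀ ℓ, γ ℓ = σ ℓ + (ℓ : ℝ) / 2)
    (i : ℕ) (hi : 2 ≤ i) (hin : i + 1 ≤ n)
    (hgap : s i ≤ s (i + 1) + 1)
    (hcond : s (i + 1) < σ i - ((i : ℝ) + 1) / 2) :
    s i < σ (i - 1) - (i : ℝ) / 2 ∧ γ (i - 1) > γ i :=
  stmt3_general s σ γ hσ hγ i hi hgap hcond
end

section
/- Let π₁₂, π₁₃, π₂₃ ≥ 0 with π₁₂ + π₁₃ + π₂₃ = 1, and v₁, v₂, v₃ ∈ [0,1) with v₁ + v₂ + v₃ = 1. Suppose v₂ < π₁₃ and v₃ < π₁₂ (strictly). Define f({1,2},1) := π₁₂ − v₃, f({1,2},3) := v₃, f({1,3},1) := π₁₃ − v₂, f({1,3},2) := v₂, f({2,3},1) := π₂₃. Then f is nonnegative, each set-vertex's outflow equals its supply, and inflows equal v₁, v₂, v₃ respectively (using π₁₂ + π₁₃ + π₂₃ = 1 and v₁ = 1 − v₂ − v₃). -/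
/-- explicit feasible flow, Case 1.2.1: With supplies
`π₁₂, π₁₃, π₂₃ ≥ 0` summing to 1, demands `v₁,v₂,v₃ ∈ [0,1)` summing to 1,
and `v₂ < π₁₃`, `v₃ < π₁₂`, the flow `f({1,2},1) = π₁₂ − v₃`,
`f({1,2},3) = v₃`, `f({1,3},1) = π₁₃ − v₂`, `f({1,3},2) = v₂`,
`f({2,3},1) = π₂₃` (all other edges 0) is nonnegative, each set-vertex's
outflow equals its supply, and the inflows equal `v₁, v₂, v₃` respectively.
Row `0,1,2` encodes the sets `{1,2},{1,3},{2,3}`; columns are parties. -/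
theorem stmt12 (p12 p13 p23 v1 v2 v3 : ℝ)
    (hp12 : 0 ≤ p12) (hp13 : 0 ≤ p13) (hp23 : 0 ≤ p23)
    (hpsum : p12 + p13 + p23 = 1)
    (hv1 : 0 ≤ v1) (hv1' : v1 < 1) (hv2 : 0 ≤ v2) (hv2' : v2 < 1)
    (hv3 : 0 ≤ v3) (hv3' : v3 < 1) (hvsum : v1 + v2 + v3 = 1)
    (h2 : v2 < p13) (h3 : v3 < p12)
    (f : Fin 3 → Fin 3 → ℝ)
    (hf : f = ![![p12 - v3, 0, v3], ![p13 - v2, v2, 0], ![p23, 0, 0]]) :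
    (∀ u j, 0 ≤ f u j) ∧
    (∑ j, f 0 j = p12) ∧ (∑ j, f 1 j = p13) ∧ (∑ j, f 2 j = p23) ∧
    (∑ u, f u 0 = v1) ∧ (∑ u, f u 1 = v2) ∧ (∑ u, f u 2 = v3) := by
  subst hf
  refine ⟨?_, ?_, ?_, ?_, ?_, ?_, ?_⟩
  · intro u j
    fin_cases u <;> fin_cases j <;>
      simp [Matrix.cons_val_zero, Matrix.cons_val_one, Matrix.head_cons, Matrix.vecHead, Matrix.vecTail] <;> linarith
  all_goals simp [Fin.sum_univ_three, Matrix.vecHead, Matrix.vecTail] <;> linarith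
end

section
/- Let π₁₂, π₁₃, π₂₃ ≥ 0 with π₁₂ + π₁₃ + π₂₃ = 1 and v₁, v₂, v₃ ∈ [0,1) with v₁ + v₂ + v₃ = 2. Suppose for each i ∈ {1,2,3}: v_i − π_{jk} ≥ 0 where {j,k} = {1,2,3}∖{i}, and v_i < 1. Consider the bipartite graph on supplies b({i,j}) = π_{ij}/2 and demands b(k) = (v_k − π_{ij'})/2 (where {i,j'} is the complement of {k}), with edges ({i,j}, k) for k ∈ {i,j}. Then total supply equals total demand equals 1/2, and Hall's condition holds for all subsets of the supply side; hence a feasible nonnegative transshipment exists. -/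
/-!
The supply side is indexed by the missing party `m`, and the set missing `m` is adjacent to every
party except `m`. So the neighbourhood of a set of at least two supply vertices is everything, and
Hall's condition reduces to the single-vertex inequalities `s m + d m ≤ 1/2`, i.e. `v m ≤ 1`.
For three parties these single-vertex conditions also suffice to build the transshipment
explicitly.
-/

open Finset

section

variable {ι : Type*} [Fintype ι]

theorem filter_exists_ne_eq_univ_erase [DecidableEq ι] (m : ι)
    [DecidablePred fun k => ∃ i ∈ ({m} : Finset ι), k ≠ i] :
    univ.filter (fun k => ∃ i ∈ ({m} : Finset ι), k ≠ i) = univ.erase m := by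
  ext k
  simp

theorem filter_exists_ne_eq_univ {S : Finset ι} {i j : ι} (hi : i ∈ S) (hj : j ∈ S)
    (hij : i ≠ j) [DecidablePred fun k => ∃ m ∈ S, k ≠ m] :
    univ.filter (fun k => ∃ m ∈ S, k ≠ m) = univ := by
  refine filter_true_of_mem fun k _ => ?_
  by_cases hk : k = i
  · exact ⟨j, hj, hk ▸ hij⟩
  · exact ⟨i, hi, hk⟩

theorem sum_le_sum_filter_exists_ne [DecidableEq ι] (s d : ι → ℝ) (hs : ∀ m, 0 ≤ s m)
    (hsum : ∑ m, s m = ∑ k, d k) (hsingle : ∀ m, s m + d m ≤ ∑ k, d k) (S : Finset ι)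
    [DecidablePred fun k => ∃ m ∈ S, k ≠ m] :
    ∑ m ∈ S, s m ≤ ∑ k ∈ univ.filter (fun k => ∃ m ∈ S, k ≠ m), d k := by
  obtain rfl | hS := S.eq_empty_or_nonempty
  · simp
  obtain ⟨m, rfl⟩ | ⟨i, hi, j, hj, hij⟩ := hS.exists_eq_singleton_or_nontrivial
  · rw [filter_exists_ne_eq_univ_erase, sum_singleton, ← add_le_add_iff_right (d m),
      sum_erase_add _ _ (mem_univ m)]
    exact hsingle m
  · rw [filter_exists_ne_eq_univ hi hj hij, ← hsum]
    exact sum_le_univ_sum_of_nonneg hs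

end

theorem exists_zero_diag_fin_three (s d : Fin 3 → ℝ) (hs : ∀ m, 0 ≤ s m) (hd : ∀ k, 0 ≤ d k)
    (hsum : ∑ m, s m = ∑ k, d k) (hsingle : ∀ m, s m + d m ≤ ∑ k, d k) :
    ∃ f : Fin 3 → Fin 3 → ℝ, (∀ m k, 0 ≤ f m k) ∧ (∀ m, f m m = 0) ∧
      (∀ m, ∑ k, f m k = s m) ∧ (∀ k, ∑ m, f m k = d k) := by
  simp only [Fin.sum_univ_three] at hsum hsingle
  have := hs 0; have := hs 1; have := hs 2; have := hd 0; have := hd 1; have := hd 2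
  have := hsingle 0; have := hsingle 1; have := hsingle 2
  -- The off-diagonal entries form a 6-cycle, so the solutions are a one-parameter family in the
  -- entry `a = f 0 1`; the single-vertex conditions make its admissible interval nonempty.
  obtain ⟨a, ha0, ha1, ha2, has, had, hae⟩ : ∃ a, 0 ≤ a ∧ d 1 - s 2 ≤ a ∧ s 0 - d 2 ≤ a ∧
      a ≤ s 0 ∧ a ≤ d 1 ∧ a ≤ d 0 + d 1 - s 2 :=
    ⟨max (max 0 (d 1 - s 2)) (s 0 - d 2), le_max_of_le_left (le_max_left _ _),
      le_max_of_le_left (le_max_right _ _), le_max_right _ _,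
      max_le (max_le (by linarith) (by linarith)) (by linarith),
      max_le (max_le (by linarith) (by linarith)) (by linarith),
      max_le (max_le (by linarith) (by linarith)) (by linarith)⟩
  refine ⟨![![0, a, s 0 - a], ![d 0 + d 1 - s 2 - a, 0, s 1 + s 2 - d 0 - d 1 + a],
    ![s 2 - d 1 + a, d 1 - a, 0]], ?_, ?_, ?_, ?_⟩
  · intro m k; fin_cases m <;> fin_cases k <;> simp <;> linarith
  · intro m; fin_cases m <;> rfl
  · intro m; fin_cases m <;> simp [Fin.sum_univ_three]; ring
  · intro k; fin_cases k <;> simp [Fin.sum_univ_three]; linarith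

/-- residual transshipment feasibility, Case 2.2.2: Index the
size-2 sets `{i,j} ⊆ {1,2,3}` by their missing party `m`, with supply
`p m / 2` where `p m := π_{ij}` (`{i,j} = {1,2,3} ∖ {m}`), `p ≥ 0`, `∑ p = 1`.
Party `k` has demand `(v k − p k)/2`, where `v k ∈ [0,1)`, `∑ v = 2`, and
`v k ≥ p k`. The set missing `m` is adjacent exactly to the parties `k ≠ m`.
Then total supply = total demand = 1/2, Hall's condition holds for every subset
of the supply side, and a feasible nonnegative transshipment exists. -/
theorem stmt13 (p v : Fin 3 → ℝ)
    (hp0 : ∀ m, 0 ≤ p m) (hpsum : ∑ m, p m = 1)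
    (hv : ∀ k, 0 ≤ v k ∧ v k < 1) (hvsum : ∑ k, v k = 2)
    (hlow : ∀ k, p k ≤ v k) :
    (∑ m, p m / 2 = 1 / 2) ∧
    (∑ k, (v k - p k) / 2 = 1 / 2) ∧
    (∀ S : Finset (Fin 3),
      ∑ m ∈ S, p m / 2
        ≤ ∑ k ∈ Finset.univ.filter (fun k => ∃ m ∈ S, k ≠ m),
            (v k - p k) / 2) ∧
    ∃ f : Fin 3 → Fin 3 → ℝ,
      (∀ m k, 0 ≤ f m k) ∧
      (∀ m, f m m = 0) ∧
      (∀ m, ∑ k, f m k = p m / 2) ∧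
      (∀ k, ∑ m, f m k = (v k - p k) / 2) := by
  have hsupply : ∑ m, p m / 2 = 1 / 2 := by rw [← sum_div, hpsum]
  have hdemand : ∑ k, (v k - p k) / 2 = 1 / 2 := by
    rw [← sum_div, sum_sub_distrib, hvsum, hpsum]; norm_num
  have hs : ∀ m, 0 ≤ p m / 2 := fun m => by linarith [hp0 m]
  have hd : ∀ k, 0 ≤ (v k - p k) / 2 := fun k => by linarith [hlow k]
  have hsum : ∑ m, p m / 2 = ∑ k, (v k - p k) / 2 := hsupply.trans hdemand.symm
  have hsingle : ∀ m, p m / 2 + (v m - p m) / 2 ≤ ∑ k, (v k - p k) / 2 := fun m => by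
    rw [hdemand]; linarith [(hv m).2]
  exact ⟨hsupply, hdemand, fun S => sum_le_sum_filter_exists_ne _ _ hs hsum hsingle S,
    exists_zero_diag_fin_three _ _ hs hd hsum hsingle⟩
end

section
/- Consider the three-party instance v¹ = (0.5, 0.5, 0), v² = (0, 0.6, 0.4), v³ = (0, 0.2, 0.8), one seat per step. The unique method satisfying global quota and ex-ante proportionality yields the joint distribution: ℙ[seats go to (1,2,3)] = 0.5, ℙ[(2,2,3)] = 0.1, ℙ[(2,3,2)] = 0.2, ℙ[(2,3,3)] = 0.2, where the triple lists the winner of steps 1, 2, 3. Under this distribution ℙ[a_2³ = 1 | a_2¹ = 0] = 0 < 0.2 = ℙ[a_2³ = 1], so negative correlation fails. -/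
/-!
Ex-ante proportionality gives a party with no votes at a step a zero marginal, so by
nonnegativity it never wins that step; this confines the winners to `{0,1} × {1,2} × {1,2}`.
Global quota then forces party 1 (cumulative vote 1.1 after step 2) to win one of the first
two seats and party 2 (cumulative vote 1.2 after step 3) to win one of the three. Only the
outcomes `(0,1,2)`, `(1,1,2)`, `(1,2,1)`, `(1,2,2)` survive, and their probabilities are
read off four marginals.
-/

theorem eq_zero_of_sum_sum_eq_zero {α β M : Type*} [Fintype α] [Fintype β]
    [AddCommMonoid M] [PartialOrder M] [AddLeftMono M] {f : α → β → M}
    (hf : ∀ a b, 0 ≤ f a b) (h : ∑ a, ∑ b, f a b = 0) (a : α) (b : β) : f a b = 0 :=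
  (Finset.sum_eq_zero_iff_of_nonneg fun b _ => hf a b).1
    ((Finset.sum_eq_zero_iff_of_nonneg fun a _ => Finset.sum_nonneg fun b _ => hf a b).1 h a
      (Finset.mem_univ a)) b (Finset.mem_univ b)

theorem one_le_of_eq_floor_or_eq_ceil {v x : ℝ} (hv : 1 ≤ v)
    (h : x = ⌊v⌋ ∨ x = ⌈v⌉) : 1 ≤ x := by
  have hfloor : 1 ≤ ⌊v⌋ := Int.le_floor.2 (by exact_mod_cast hv)
  rcases h with rfl | rfl
  · exact_mod_cast hfloor
  · exact_mod_cast hfloor.trans (Int.floor_le_ceil v)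

theorem stmt16_general (P : Fin 3 → Fin 3 → Fin 3 → ℝ)
    (v1 v2 v3 : Fin 3 → ℝ)
    (hv1 : v1 = ![1 / 2, 1 / 2, 0])
    (hv2 : v2 = ![0, 3 / 5, 2 / 5])
    (hv3 : v3 = ![0, 1 / 5, 4 / 5])
    (hP0 : ∀ i j k, 0 ≤ P i j k)
    -- global quota at each of the three steps, on every realization of
    -- positive probability:
    (hquota : ∀ i j k, 0 < P i j k → ∀ m : Fin 3,
      (((if m = i then (1 : ℝ) else 0) = (⌊v1 m⌋ : ℝ) ∨
        (if m = i then (1 : ℝ) else 0) = (⌈v1 m⌉ : ℝ)) ∧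
       (((if m = i then (1 : ℝ) else 0) + (if m = j then 1 else 0)
           = (⌊v1 m + v2 m⌋ : ℝ)) ∨
        ((if m = i then (1 : ℝ) else 0) + (if m = j then 1 else 0)
           = (⌈v1 m + v2 m⌉ : ℝ))) ∧
       (((if m = i then (1 : ℝ) else 0) + (if m = j then 1 else 0)
           + (if m = k then 1 else 0) = (⌊v1 m + v2 m + v3 m⌋ : ℝ)) ∨
        ((if m = i then (1 : ℝ) else 0) + (if m = j then 1 else 0)
           + (if m = k then 1 else 0) = (⌈v1 m + v2 m + v3 m⌉ : ℝ)))))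
    -- ex-ante proportionality at each step:
    (hexante1 : ∀ m, ∑ j, ∑ k, P m j k = v1 m)
    (hexante2 : ∀ m, ∑ i, ∑ k, P i m k = v2 m)
    (hexante3 : ∀ m, ∑ i, ∑ j, P i j m = v3 m) :
    P 0 1 2 = 1 / 2 ∧ P 1 1 2 = 1 / 10 ∧ P 1 2 1 = 1 / 5 ∧ P 1 2 2 = 1 / 5 ∧
      ((∑ j, P 0 j 1) + (∑ j, P 2 j 1) = 0) ∧
      (∑ i, ∑ j, P i j 1) = 1 / 5 := by
  subst hv1 hv2 hv3
  have hzero_votes1 : ∀ j k, P 2 j k = 0 :=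
    eq_zero_of_sum_sum_eq_zero (hP0 2) (by simpa using hexante1 2)
  have hzero_votes2 : ∀ i k, P i 0 k = 0 :=
    eq_zero_of_sum_sum_eq_zero (fun i k => hP0 i 0 k) (by simpa using hexante2 0)
  have hzero_votes3 : ∀ i j, P i j 0 = 0 :=
    eq_zero_of_sum_sum_eq_zero (fun i j => hP0 i j 0) (by simpa using hexante3 0)
  have hquota_party1 : ∀ k, P 0 2 k = 0 := by
    intro k
    by_contra hne
    have h := one_le_of_eq_floor_or_eq_ceil (by norm_num [Matrix.cons_val_two])
      (hquota 0 2 k ((hP0 0 2 k).lt_of_ne' hne) 1).2.1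
    norm_num [Fin.ext_iff] at h
  have hquota_party2 : ∀ i, i ≠ 2 → P i 1 1 = 0 := by
    intro i hi
    by_contra hne
    have h := one_le_of_eq_floor_or_eq_ceil (by norm_num [Matrix.cons_val_two])
      (hquota i 1 1 ((hP0 i 1 1).lt_of_ne' hne) 2).2.2
    norm_num [Ne.symm hi, Fin.ext_iff] at h
  have e10 := hexante1 0
  have e11 := hexante1 1
  have e21 := hexante2 1
  have e31 := hexante3 1
  simp only [Fin.isValue, Fin.sum_univ_three, hzero_votes1, hzero_votes2, hzero_votes3,
    hquota_party1, hquota_party2, zero_add, add_zero, ne_eq, Fin.reduceEq, not_false_eq_true,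
    Nat.succ_eq_add_one, Nat.reduceAdd, one_div, Matrix.cons_val_zero, Matrix.cons_val_one,
    Finset.sum_const_zero, true_and] at e10 e11 e21 e31 ⊢
  refine ⟨?_, ?_, ?_, ?_, ?_⟩ <;> linarith

/-- Three-party instance `v¹ = (0.5, 0.5, 0)`,
`v² = (0, 0.6, 0.4)`, `v³ = (0, 0.2, 0.8)`, one seat per step. `P i j k` is the
probability that the seats of steps 1,2,3 go to parties `i,j,k` (0-indexed).
Any method satisfying local quota, global quota (on every realization of
positive probability) and ex-ante proportionality has the unique joint
distribution `ℙ[(1,2,3)] = 0.5`, `ℙ[(2,2,3)] = 0.1`, `ℙ[(2,3,2)] = 0.2`,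
`ℙ[(2,3,3)] = 0.2`; in particular
`ℙ[a₂³ = 1 ∧ a₂¹ = 0] = 0` while `ℙ[a₂³ = 1] = 0.2`, so negative correlation
fails. -/
theorem stmt16 (P : Fin 3 → Fin 3 → Fin 3 → ℝ)
    (v1 v2 v3 : Fin 3 → ℝ)
    (hv1 : v1 = ![1 / 2, 1 / 2, 0])
    (hv2 : v2 = ![0, 3 / 5, 2 / 5])
    (hv3 : v3 = ![0, 1 / 5, 4 / 5])
    (hP0 : ∀ i j k, 0 ≤ P i j k)
    (hPsum : ∑ i, ∑ j, ∑ k, P i j k = 1)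
    -- local quota: a party with zero votes in a step never wins that step:
    (hsupp : ∀ i j k, 0 < P i j k → 0 < v1 i ∧ 0 < v2 j ∧ 0 < v3 k)
    -- global quota at each of the three steps, on every realization of
    -- positive probability:
    (hquota : ∀ i j k, 0 < P i j k → ∀ m : Fin 3,
      (((if m = i then (1 : ℝ) else 0) = (⌊v1 m⌋ : ℝ) ∨
        (if m = i then (1 : ℝ) else 0) = (⌈v1 m⌉ : ℝ)) ∧
       (((if m = i then (1 : ℝ) else 0) + (if m = j then 1 else 0)
           = (⌊v1 m + v2 m⌋ : ℝ)) ∨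
        ((if m = i then (1 : ℝ) else 0) + (if m = j then 1 else 0)
           = (⌈v1 m + v2 m⌉ : ℝ))) ∧
       (((if m = i then (1 : ℝ) else 0) + (if m = j then 1 else 0)
           + (if m = k then 1 else 0) = (⌊v1 m + v2 m + v3 m⌋ : ℝ)) ∨
        ((if m = i then (1 : ℝ) else 0) + (if m = j then 1 else 0)
           + (if m = k then 1 else 0) = (⌈v1 m + v2 m + v3 m⌉ : ℝ)))))
    -- ex-ante proportionality at each step:
    (hexante1 : ∀ m, ∑ j, ∑ k, P m j k = v1 m)
    (hexante2 : ∀ m, ∑ i, ∑ k, P i m k = v2 m)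
    (hexante3 : ∀ m, ∑ i, ∑ j, P i j m = v3 m) :
    P 0 1 2 = 1 / 2 ∧ P 1 1 2 = 1 / 10 ∧ P 1 2 1 = 1 / 5 ∧ P 1 2 2 = 1 / 5 ∧
      ((∑ j, P 0 j 1) + (∑ j, P 2 j 1) = 0) ∧
      (∑ i, ∑ j, P i j 1) = 1 / 5 :=
  stmt16_general P v1 v2 v3 hv1 hv2 hv3 hP0 hquota hexante1 hexante2 hexante3
end
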